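/- For n ≥ 4 agents {a,b,c,d,i₁,…,i_{n−4}}, the call sequence (a,i₁),…,(a,i_{n−4}), (a,b), (c,d), (a,d), (b,c), (a,i₁),…,(a,i_{n−4}) of length 2n − 4 applied to root makes every agent an expert. -/

import Mathlib

/-!
Knowledge only grows along a call sequence. The first round of side calls lets `a` collect
the secrets of `i₁, …, i_{n−4}`; the four middle calls then make `a, b, c, d` experts, as in
the optimal protocol for four agents; in the second round `a`, now an expert, passes every
secret to each `iⱼ`.
-/

/-- A call is an ordered pair of distinct agents (caller, callee). -/
def Call (n : ℕ) : Type := {p : Fin n × Fin n // p.1 ≠ p.2}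

namespace Gossip

variable {n : ℕ}

/-- The caller of a call. -/
def caller (c : Call n) : Fin n := c.1.1

/-- The callee of a call. -/
def callee (c : Call n) : Fin n := c.1.2

/-- Agent `a` is involved in call `c`. -/
def involves (c : Call n) (a : Fin n) : Prop := a = caller c ∨ a = callee c

/-- A gossip situation assigns to each agent the set of secrets it is familiar with;
secrets are identified with the agents holding them. -/
def Situation (n : ℕ) := Fin n → Finset (Fin n)

/-- The initial gossip situation: every agent only holds its own secret. -/
def root : Situation n := fun a => {a}

/-- The effect of a call on a gossip situation: caller and callee share their secrets. -/
def applyCall (c : Call n) (s : Situation n) : Situation n :=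
  fun x => if x = caller c ∨ x = callee c then s (caller c) ∪ s (callee c) else s x

/-- The effect of a call sequence on a gossip situation. -/
def applySeq (σ : List (Call n)) (s : Situation n) : Situation n :=
  σ.foldl (fun t c => applyCall c t) s

end Gossip

open Gossip

/-- Among `n ≥ 4` agents we name `a, b, c, d` the agents with indices `0, 1, 2, 3`
and `i₁, …, i_{n−4}` the agents with indices `4, …, n − 1`. -/
def agent {n : ℕ} (hn : 4 ≤ n) (k : ℕ) (hk : k < 4) : Fin n := ⟨k, by omega⟩

/-- A call between two named agents. -/
def mkCall {n : ℕ} (hn : 4 ≤ n) (k l : ℕ) (hk : k < 4) (hl : l < 4) (hkl : k ≠ l) :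
    Call n :=
  ⟨(agent hn k hk, agent hn l hl), by apply Fin.ne_of_val_ne; simpa [agent] using hkl⟩

/-- The calls `(a, i₁), …, (a, i_{n−4})`: agent `a` calls each of the remaining agents. -/
def sideCalls {n : ℕ} (hn : 4 ≤ n) : List (Call n) :=
  (List.finRange (n - 4)).map (fun j =>
    ⟨(agent hn 0 (by omega), ⟨j.1 + 4, by have := j.isLt; omega⟩), by
      apply Fin.ne_of_val_ne; simp [agent]⟩)

/-- The middle calls `(a,b), (c,d), (a,d), (b,c)`. -/
def midCalls {n : ℕ} (hn : 4 ≤ n) : List (Call n) :=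
  [mkCall hn 0 1 (by omega) (by omega) (by omega),
   mkCall hn 2 3 (by omega) (by omega) (by omega),
   mkCall hn 0 3 (by omega) (by omega) (by omega),
   mkCall hn 1 2 (by omega) (by omega) (by omega)]

namespace Gossip

variable {n : ℕ}

lemma applyCall_of_involves {c : Call n} {x : Fin n} (hx : involves c x) (s : Situation n) :
    applyCall c s x = s (caller c) ∪ s (callee c) :=
  if_pos hx

lemma subset_applyCall (c : Call n) (s : Situation n) (x : Fin n) :
    s x ⊆ applyCall c s x := by
  by_cases hx : involves c x
  · rw [applyCall_of_involves hx]
    rcases hx with rfl | rfl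
    · exact Finset.subset_union_left
    · exact Finset.subset_union_right
  · exact (if_neg hx).superset

lemma applySeq_cons (c : Call n) (σ : List (Call n)) (s : Situation n) :
    applySeq (c :: σ) s = applySeq σ (applyCall c s) := rfl

lemma applySeq_append (σ τ : List (Call n)) (s : Situation n) :
    applySeq (σ ++ τ) s = applySeq τ (applySeq σ s) :=
  List.foldl_append

lemma subset_applySeq (σ : List (Call n)) (s : Situation n) (x : Fin n) :
    s x ⊆ applySeq σ s x := by
  induction σ generalizing s with
  | nil => exact subset_rfl
  | cons c σ ih => exact (subset_applyCall c s x).trans (ih _)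

lemma mem_applySeq_root_self (σ : List (Call n)) (x : Fin n) : x ∈ applySeq σ root x :=
  subset_applySeq σ root x (Finset.mem_singleton_self x)

lemma union_subset_applySeq_of_mem {σ : List (Call n)} {c : Call n} (hc : c ∈ σ) {x : Fin n}
    (hx : involves c x) (s : Situation n) :
    s (caller c) ∪ s (callee c) ⊆ applySeq σ s x := by
  obtain ⟨σ₁, σ₂, rfl⟩ := List.append_of_mem hc
  rw [applySeq_append, applySeq_cons]
  set t := applySeq σ₁ s
  calc s (caller c) ∪ s (callee c) ⊆ t (caller c) ∪ t (callee c) :=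
        Finset.union_subset_union (subset_applySeq _ _ _) (subset_applySeq _ _ _)
    _ = applyCall c t x := (applyCall_of_involves hx t).symm
    _ ⊆ applySeq σ₂ (applyCall c t) x := subset_applySeq _ _ _

end Gossip

section TwoNMinusFour

variable {n : ℕ} (hn : 4 ≤ n)

lemma length_sideCalls : (sideCalls hn).length = n - 4 :=
  (List.length_map _).trans List.length_finRange

lemma exists_mem_sideCalls {j : Fin n} (hj : 4 ≤ j.val) :
    ∃ c ∈ sideCalls hn, caller c = agent hn 0 (by omega) ∧ callee c = j :=
  ⟨_, List.mem_map.mpr ⟨⟨j.val - 4, by omega⟩, List.mem_finRange _, rfl⟩, rfl,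
    Fin.ext (by simp [callee]; omega)⟩

lemma subset_applySeq_sideCalls {j : Fin n} (hj : 4 ≤ j.val) (s : Situation n) :
    s (agent hn 0 (by omega)) ⊆ applySeq (sideCalls hn) s j ∧
      s j ⊆ applySeq (sideCalls hn) s (agent hn 0 (by omega)) := by
  obtain ⟨c, hc, hcaller, hcallee⟩ := exists_mem_sideCalls hn hj
  have key := fun x (hx : involves c x) => union_subset_applySeq_of_mem hc hx s
  rw [hcaller, hcallee] at key
  exact ⟨Finset.union_subset_left (key j (Or.inr hcallee.symm)),
    Finset.union_subset_right (key _ (Or.inl hcaller.symm))⟩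

/-- `(a,b), (c,d)` pair the four agents up, and `(a,d), (b,c)` then cross the two pairs. -/
lemma applySeq_midCalls_agent (s : Situation n) {k : ℕ} (hk : k < 4) :
    applySeq (midCalls hn) s (agent hn k hk) =
      s (agent hn 0 (by omega)) ∪ (s (agent hn 1 (by omega)) ∪
        (s (agent hn 2 (by omega)) ∪ s (agent hn 3 (by omega)))) := by
  interval_cases k <;>
    simp [midCalls, applySeq, applyCall, mkCall, agent, caller, callee, Call]

lemma subset_applySeq_midCalls (s : Situation n) {k l : ℕ} (hk : k < 4) (hl : l < 4) :
    s (agent hn l hl) ⊆ applySeq (midCalls hn) s (agent hn k hk) := by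
  intro x hx
  rw [applySeq_midCalls_agent, Finset.mem_union, Finset.mem_union, Finset.mem_union]
  interval_cases l <;> tauto

lemma applySeq_sideCalls_midCalls_root_agent {k : ℕ} (hk : k < 4) :
    applySeq (sideCalls hn ++ midCalls hn) root (agent hn k hk) = Finset.univ := by
  refine Finset.eq_univ_of_forall fun x => ?_
  rw [applySeq_append]
  by_cases hx : 4 ≤ x.val
  · exact subset_applySeq_midCalls hn _ hk (by omega)
      ((subset_applySeq_sideCalls hn hx root).2 (Finset.mem_singleton_self x))
  · exact subset_applySeq_midCalls hn _ hk (by omega) (l := x.val)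
      (mem_applySeq_root_self (sideCalls hn) x)

end TwoNMinusFour

/-- the call sequence
`(a,i₁),…,(a,i_{n−4}), (a,b), (c,d), (a,d), (b,c), (a,i₁),…,(a,i_{n−4})`
has length `2n − 4` and applied to `root` makes every agent an expert. -/
theorem two_n_minus_four_calls_suffice {n : ℕ} (hn : 4 ≤ n) :
    (sideCalls hn ++ midCalls hn ++ sideCalls hn).length = 2 * n - 4 ∧
    ∀ e : Fin n,
      applySeq (sideCalls hn ++ midCalls hn ++ sideCalls hn) root e = Finset.univ := by
  refine ⟨by simp [length_sideCalls, midCalls]; omega, fun e => ?_⟩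
  rw [applySeq_append, ← Finset.univ_subset_iff]
  by_cases he : 4 ≤ e.val
  · rw [← applySeq_sideCalls_midCalls_root_agent hn (k := 0) (by omega)]
    exact (subset_applySeq_sideCalls hn he _).1
  · rw [← applySeq_sideCalls_midCalls_root_agent hn (k := e.val) (by omega)]
    exact subset_applySeq _ _ _
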